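/- Under the GAS identifiability conditions, the rank of the concatenated column-centered natural parameter matrix (Θ̃1, Θ̃2) = (U0V1ᵀ + U1A1ᵀ, U0V2ᵀ + U2A2ᵀ) is exactly r0 + r1 + r2, and rank(Θ̃k) = r0 + rk for k = 1, 2. -/

import Mathlib

open Matrix BigOperators

/-- Frobenius norm of a real matrix. -/
noncomputable def frobNorm {m n : Type*} [Fintype m] [Fintype n]
    (X : Matrix m n ℝ) : ℝ :=
  Real.sqrt (∑ i, ∑ j, (X i j) ^ 2)

/-- Nuclear norm: sum of singular values, i.e. the sum of the square roots of
the eigenvalues of `Xᴴ * X`. -/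
noncomputable def nuclearNorm {m n : Type*} [Fintype m] [Fintype n] [DecidableEq n]
    (X : Matrix m n ℝ) : ℝ :=
  ∑ i, Real.sqrt ((show (Xᵀ * X).IsHermitian by
    rw [← Matrix.conjTranspose_eq_transpose_of_trivial]
    exact Matrix.isHermitian_conjTranspose_mul_self X).eigenvalues i)


/-! The matrix `(Θ̃₁, Θ̃₂)` factors as `(U₀, U₁, U₂) Cᵀ` with `C = [[V₁, A₁, 0], [V₂, 0, A₂]]`, and
`Θ̃ₖ = (U₀, Uₖ) (Vₖ, Aₖ)ᵀ`. A product `B Cᵀ` of two matrices of full column rank `r` has rank `r`.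
The left factors have full column rank because `U₀` is orthogonal to `(U₁, U₂)`. For `C`, a kernel
vector `(a, b, c)` satisfies `V₁ a + A₁ b = 0` and `V₂ a + A₂ c = 0`, so `(a, b) = 0` by the rank of
`(V₁, A₁)`, and then `c = 0` by the rank of `(V₂, A₂)`. -/

namespace Matrix

variable {K : Type*} {l m n n₁ n₂ k₀ k₁ k₂ p₁ p₂ : Type*}

section CommRing

variable [CommRing K]

theorem injective_mulVec_fromCols_iff [Fintype n₁] [Fintype n₂] (P : Matrix m n₁ K)
    (Q : Matrix m n₂ K) :
    Function.Injective (fromCols P Q).mulVec ↔ ∀ a b, P *ᵥ a + Q *ᵥ b = 0 → a = 0 ∧ b = 0 := by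
  rw [← coe_mulVecLin, injective_iff_map_eq_zero,
    (Equiv.sumArrowEquivProdArrow n₁ n₂ K).forall_congr_left, Prod.forall]
  simp [Equiv.sumArrowEquivProdArrow, funext_iff]

theorem injective_mulVec_of_injective_mulVec_fromCols_left [Fintype n₁] [Fintype n₂]
    {P : Matrix m n₁ K} {Q : Matrix m n₂ K} (h : Function.Injective (fromCols P Q).mulVec) :
    Function.Injective P.mulVec := by
  rw [← coe_mulVecLin, injective_iff_map_eq_zero]
  intro a ha
  simpa using ((injective_mulVec_fromCols_iff P Q).1 h a 0 (by simpa using ha)).1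

theorem injective_mulVec_of_injective_mulVec_fromCols_right [Fintype n₁] [Fintype n₂]
    {P : Matrix m n₁ K} {Q : Matrix m n₂ K} (h : Function.Injective (fromCols P Q).mulVec) :
    Function.Injective Q.mulVec := by
  rw [← coe_mulVecLin, injective_iff_map_eq_zero]
  intro b hb
  simpa using ((injective_mulVec_fromCols_iff P Q).1 h 0 b (by simpa using hb)).2

variable [Fintype k₀] [Fintype k₁] [Fintype k₂]

theorem injective_mulVec_fromCols_fromRows_fromBlocks
    {V₁ : Matrix p₁ k₀ K} {V₂ : Matrix p₂ k₀ K} {A₁ : Matrix p₁ k₁ K} {A₂ : Matrix p₂ k₂ K}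
    (h₁ : Function.Injective (fromCols V₁ A₁).mulVec)
    (h₂ : Function.Injective (fromCols V₂ A₂).mulVec) :
    Function.Injective (fromCols (fromRows V₁ V₂) (fromBlocks A₁ 0 0 A₂)).mulVec := by
  rw [injective_mulVec_fromCols_iff]
  intro a bc habc
  obtain ⟨b, c, rfl⟩ : ∃ b c, Sum.elim b c = bc := ⟨_, _, Sum.elim_comp_inl_inr bc⟩
  rw [fromRows_mulVec, fromBlocks_mulVec, ← Sum.elim_add_add, ← Sum.elim_zero_zero] at habc
  simp only [Sum.elim_comp_inl, Sum.elim_comp_inr, zero_mulVec, add_zero, zero_add] at habc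
  have h₁₀ : V₁ *ᵥ a + A₁ *ᵥ b = 0 := funext fun i ↦ congrFun habc (Sum.inl i)
  have h₂₀ : V₂ *ᵥ a + A₂ *ᵥ c = 0 := funext fun i ↦ congrFun habc (Sum.inr i)
  obtain ⟨rfl, rfl⟩ := (injective_mulVec_fromCols_iff V₁ A₁).1 h₁ a b h₁₀
  obtain ⟨-, rfl⟩ := (injective_mulVec_fromCols_iff V₂ A₂).1 h₂ 0 c h₂₀
  exact ⟨rfl, Sum.elim_zero_zero⟩

theorem fromCols_mul_transpose_add_mul_transpose (U₀ : Matrix m k₀ K) (U₁ : Matrix m k₁ K)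
    (U₂ : Matrix m k₂ K) (V₁ : Matrix p₁ k₀ K) (V₂ : Matrix p₂ k₀ K) (A₁ : Matrix p₁ k₁ K)
    (A₂ : Matrix p₂ k₂ K) :
    fromCols (U₀ * V₁ᵀ + U₁ * A₁ᵀ) (U₀ * V₂ᵀ + U₂ * A₂ᵀ) =
      fromCols U₀ (fromCols U₁ U₂) * (fromCols (fromRows V₁ V₂) (fromBlocks A₁ 0 0 A₂))ᵀ := by
  rw [transpose_fromCols, transpose_fromRows, fromBlocks_transpose, fromCols_mul_fromRows,
    mul_fromCols, fromCols_mul_fromBlocks]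
  ext i (j | j) <;> simp

end CommRing

section Field

variable [Field K]

theorem rank_eq_card_iff_injective_mulVec [Fintype n] (A : Matrix m n K) :
    A.rank = Fintype.card n ↔ Function.Injective A.mulVec := by
  rw [mulVec_injective_iff, linearIndependent_iff_card_eq_finrank_span, rank_eq_finrank_span_cols,
    Set.finrank, eq_comm]

theorem rank_mul_of_injective_mulVec [Fintype m] [Fintype n] (A : Matrix l m K)
    (B : Matrix m n K) (hA : Function.Injective A.mulVec) : (A * B).rank = B.rank := by
  rw [rank, rank, mulVecLin_mul, LinearMap.range_comp,
    ← (Submodule.equivMapOfInjective A.mulVecLin hA _).finrank_eq]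

theorem rank_mul_transpose_of_injective_mulVec [Fintype m] [Fintype k₀] (B : Matrix l k₀ K)
    (C : Matrix m k₀ K) (hB : Function.Injective B.mulVec) (hC : Function.Injective C.mulVec) :
    (B * Cᵀ).rank = Fintype.card k₀ := by
  rw [rank_mul_of_injective_mulVec B Cᵀ hB, rank_transpose,
    (rank_eq_card_iff_injective_mulVec C).2 hC]

theorem rank_mul_transpose_add_mul_transpose [Fintype m] [Fintype k₀] [Fintype k₁]
    {U₀ : Matrix l k₀ K} {U₁ : Matrix l k₁ K} {V : Matrix m k₀ K} {A : Matrix m k₁ K}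
    (hU : Function.Injective (fromCols U₀ U₁).mulVec)
    (hVA : Function.Injective (fromCols V A).mulVec) :
    (U₀ * Vᵀ + U₁ * Aᵀ).rank = Fintype.card k₀ + Fintype.card k₁ := by
  rw [← fromCols_mul_fromRows, ← transpose_fromCols,
    rank_mul_transpose_of_injective_mulVec _ _ hU hVA, Fintype.card_sum]

variable [LinearOrder K] [IsStrictOrderedRing K]

theorem injective_mulVec_fromCols_of_transpose_mul_eq_zero [Fintype m] [Fintype n₁] [Fintype n₂]
    {P : Matrix m n₁ K} {Q : Matrix m n₂ K} (hP : Function.Injective P.mulVec)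
    (hQ : Function.Injective Q.mulVec) (hPQ : Pᵀ * Q = 0) :
    Function.Injective (fromCols P Q).mulVec := by
  rw [injective_mulVec_fromCols_iff]
  intro a b hab
  have hPa : P *ᵥ a = 0 := by
    have : (Pᵀ * P) *ᵥ a = 0 := by
      rw [← mulVec_mulVec, eq_neg_of_add_eq_zero_left hab, mulVec_neg, mulVec_mulVec, hPQ,
        zero_mulVec, neg_zero]
    exact (SetLike.ext_iff.1 (ker_mulVecLin_transpose_mul_self P) a).1 this
  have hQb : Q *ᵥ b = 0 := by rwa [hPa, zero_add] at hab
  exact ⟨hP (hPa.trans (mulVec_zero P).symm), hQ (hQb.trans (mulVec_zero Q).symm)⟩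

end Field

end Matrix

theorem gas_ranks_general (n p1 p2 r0 r1 r2 : ℕ)
    (U0 : Matrix (Fin n) (Fin r0) ℝ)
    (U1 : Matrix (Fin n) (Fin r1) ℝ) (U2 : Matrix (Fin n) (Fin r2) ℝ)
    (V1 : Matrix (Fin p1) (Fin r0) ℝ) (V2 : Matrix (Fin p2) (Fin r0) ℝ)
    (A1 : Matrix (Fin p1) (Fin r1) ℝ) (A2 : Matrix (Fin p2) (Fin r2) ℝ)
    (hU0 : U0.rank = r0)
    (hU01 : U0ᵀ * U1 = 0) (hU02 : U0ᵀ * U2 = 0)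
    (hU12 : (Matrix.fromCols U1 U2).rank = r1 + r2)
    (hVA1 : (Matrix.fromCols V1 A1).rank = r0 + r1)
    (hVA2 : (Matrix.fromCols V2 A2).rank = r0 + r2) :
    (Matrix.fromCols (U0 * V1ᵀ + U1 * A1ᵀ) (U0 * V2ᵀ + U2 * A2ᵀ)).rank = r0 + r1 + r2 ∧
      (U0 * V1ᵀ + U1 * A1ᵀ).rank = r0 + r1 ∧
      (U0 * V2ᵀ + U2 * A2ᵀ).rank = r0 + r2 := by
  have hU0i := (rank_eq_card_iff_injective_mulVec U0).1 (by simp [hU0])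
  have hU12i := (rank_eq_card_iff_injective_mulVec (fromCols U1 U2)).1 (by simp [hU12])
  have hVA1i := (rank_eq_card_iff_injective_mulVec (fromCols V1 A1)).1 (by simp [hVA1])
  have hVA2i := (rank_eq_card_iff_injective_mulVec (fromCols V2 A2)).1 (by simp [hVA2])
  have hU01i := injective_mulVec_fromCols_of_transpose_mul_eq_zero hU0i
    (injective_mulVec_of_injective_mulVec_fromCols_left hU12i) hU01
  have hU02i := injective_mulVec_fromCols_of_transpose_mul_eq_zero hU0i
    (injective_mulVec_of_injective_mulVec_fromCols_right hU12i) hU02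
  have hU012i := injective_mulVec_fromCols_of_transpose_mul_eq_zero hU0i hU12i
    (by rw [mul_fromCols, hU01, hU02, fromCols_zero])
  refine ⟨?_, ?_, ?_⟩
  · rw [fromCols_mul_transpose_add_mul_transpose, rank_mul_transpose_of_injective_mulVec _ _
      hU012i (injective_mulVec_fromCols_fromRows_fromBlocks hVA1i hVA2i)]
    simp [add_assoc]
  · simpa using rank_mul_transpose_add_mul_transpose hU01i hVA1i
  · simpa using rank_mul_transpose_add_mul_transpose hU02i hVA2i

/-- under the GAS identifiability conditions, the concatenated
centered natural parameter matrix has rank `r0 + r1 + r2`, and the individual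
matrices have ranks `r0 + r1` and `r0 + r2`. -/
theorem gas_ranks (n p1 p2 r0 r1 r2 : ℕ)
    (U0 : Matrix (Fin n) (Fin r0) ℝ)
    (U1 : Matrix (Fin n) (Fin r1) ℝ) (U2 : Matrix (Fin n) (Fin r2) ℝ)
    (V1 : Matrix (Fin p1) (Fin r0) ℝ) (V2 : Matrix (Fin p2) (Fin r0) ℝ)
    (A1 : Matrix (Fin p1) (Fin r1) ℝ) (A2 : Matrix (Fin p2) (Fin r2) ℝ)
    (hU0 : U0.rank = r0) (hU1 : U1.rank = r1) (hU2 : U2.rank = r2)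
    (hU01 : U0ᵀ * U1 = 0) (hU02 : U0ᵀ * U2 = 0)
    (hU12 : (Matrix.fromCols U1 U2).rank = r1 + r2)
    (hV : V1ᵀ * V1 + V2ᵀ * V2 = 1) (hA1 : A1ᵀ * A1 = 1) (hA2 : A2ᵀ * A2 = 1)
    (hJ1 : (U0 * V1ᵀ).rank = r0) (hJ2 : (U0 * V2ᵀ).rank = r0)
    (hVA1 : (Matrix.fromCols V1 A1).rank = r0 + r1)
    (hVA2 : (Matrix.fromCols V2 A2).rank = r0 + r2) :
    (Matrix.fromCols (U0 * V1ᵀ + U1 * A1ᵀ) (U0 * V2ᵀ + U2 * A2ᵀ)).rank = r0 + r1 + r2 ∧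
      (U0 * V1ᵀ + U1 * A1ᵀ).rank = r0 + r1 ∧
      (U0 * V2ᵀ + U2 * A2ᵀ).rank = r0 + r2 :=
  gas_ranks_general n p1 p2 r0 r1 r2 U0 U1 U2 V1 V2 A1 A2 hU0 hU01 hU02 hU12 hVA1 hVA2
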